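/- Let m ≥ 1, let Σ be an m×m real symmetric positive definite matrix with symmetric positive definite square root Σ^{1/2}, let t_1,…,t_m be real numbers, set t_{m+1} := 0 and c_i := t_i − t_{i+1}, and define φ : M_m(ℝ) → ℂ by φ(T) := ∏_{i=1}^m det(E_iᵀ(I_m − i·Σ^{1/2} T Σ^{1/2})E_i)^{−c_i}, using principal-branch complex powers. Let T be an m×m real matrix such that det(E_iᵀ(I_m − i·Σ^{1/2} T Σ^{1/2})E_i) does not lie in (−∞,0] for each i = 1,…,m. Then φ is twice Fréchet differentiable (over ℝ) at T, and its second derivative satisfies D²φ(T)(H, K) = i²·[ (∑_{i=1}^m c_i tr(A_i H))·(∑_{j=1}^m c_j tr(A_j K)) + ∑_{i=1}^m c_i tr(A_i H A_i K) ]·φ(T) for all H, K ∈ M_m(ℝ), where A_i := Σ^{1/2} E_i (E_iᵀ(I_m − i·Σ^{1/2} T Σ^{1/2})E_i)^{−1} E_iᵀ Σ^{1/2}. -/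

import Mathlib

open MeasureTheory Matrix Finset

noncomputable section

/-- Measurable space structure on real matrices (the product σ-algebra). -/
instance matrixMeasurableSpace (m n : ℕ) : MeasurableSpace (Matrix (Fin m) (Fin n) ℝ) :=
  MeasurableSpace.pi

attribute [local instance] Matrix.normedAddCommGroup Matrix.normedSpace

/-- `nth κ j` is `κ j` when `j < m` and `0` otherwise. -/
def nth {m : ℕ} (κ : Fin m → ℕ) (j : ℕ) : ℕ := if h : j < m then κ ⟨j, h⟩ else 0

/-- Determinant of the `k × k` leading principal submatrix (for `k ≤ m`). -/
def lpm {R : Type*} [CommRing R] {m : ℕ} (A : Matrix (Fin m) (Fin m) R) (k : ℕ) : R :=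
  (Matrix.of fun r s : Fin (min k m) =>
    A (Fin.castLE (min_le_right k m) r) (Fin.castLE (min_le_right k m) s)).det

/-- The generalized power (highest weight vector)
`q_κ(A) = det(A)^{k_m} ∏_{i=1}^{m-1} det(A_i)^{k_i - k_{i+1}}`. -/
def gpow {R : Type*} [CommRing R] {m : ℕ} (κ : Fin m → ℕ) (A : Matrix (Fin m) (Fin m) R) : R :=
  ∏ i : Fin m, lpm A ((i : ℕ) + 1) ^ (nth κ (i : ℕ) - nth κ ((i : ℕ) + 1))

/-- Lebesgue measure on symmetric matrices: the pushforward of Lebesgue measure on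
`ℝ^{m(m+1)/2}` under the coordinates `(x_{ij})_{i ≤ j}`. -/
def symVolume (m : ℕ) : Measure (Matrix (Fin m) (Fin m) ℝ) :=
  Measure.map (fun x : ({p : Fin m × Fin m // p.1 ≤ p.2} → ℝ) =>
    Matrix.of fun i j => if h : i ≤ j then x ⟨(i, j), h⟩ else x ⟨(j, i), le_of_not_ge h⟩)
    volume

/-- The open cone of symmetric positive definite real matrices. -/
def PDcone (m : ℕ) : Set (Matrix (Fin m) (Fin m) ℝ) := {X | X.PosDef}

/-- The `m × k` matrix formed by the first `k` columns of the identity matrix. -/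
def Emat (R : Type*) [Zero R] [One R] (m k : ℕ) : Matrix (Fin m) (Fin k) R :=
  Matrix.of fun r c => if (r : ℕ) = (c : ℕ) then 1 else 0

/-- The generalized gamma function of weight `κ`:
`Γ_m[a, κ] = π^{m(m-1)/4} ∏_{i=1}^m Γ(a + k_i - (i-1)/2)`. -/
def GammaI (m : ℕ) (κ : Fin m → ℕ) (a : ℝ) : ℝ :=
  Real.pi ^ (((m * (m - 1) : ℕ) : ℝ) / 4) *
    ∏ i : Fin m, Real.Gamma (a + κ i - (i : ℝ) / 2)

/-- Kotz's generalized gamma function of weight `-κ`: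
`Γ_m[a, -κ] = π^{m(m-1)/4} ∏_{i=1}^m Γ(a - k_i - (m-i)/2)`. -/
def GammaII (m : ℕ) (κ : Fin m → ℕ) (a : ℝ) : ℝ :=
  Real.pi ^ (((m * (m - 1) : ℕ) : ℝ) / 4) *
    ∏ i : Fin m, Real.Gamma (a - κ i - ((m : ℝ) - 1 - (i : ℝ)) / 2)

/-- The Riesz type I density with parameters `(a, κ, Σ)`. -/
def densityI {m : ℕ} (κ : Fin m → ℕ) (Sig : Matrix (Fin m) (Fin m) ℝ) (a : ℝ)
    (X : Matrix (Fin m) (Fin m) ℝ) : ℝ :=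
  Real.exp (-((Sig⁻¹ * X).trace)) * X.det ^ (a - ((m : ℝ) + 1) / 2) * gpow κ X /
    (GammaI m κ a * Sig.det ^ a * gpow κ Sig)

/-- The Riesz type II density with parameters `(a, κ, Σ)`. -/
def densityII {m : ℕ} (κ : Fin m → ℕ) (Sig : Matrix (Fin m) (Fin m) ℝ) (a : ℝ)
    (X : Matrix (Fin m) (Fin m) ℝ) : ℝ :=
  Real.exp (-((Sig⁻¹ * X).trace)) * X.det ^ (a - ((m : ℝ) + 1) / 2) * gpow κ X⁻¹ /
    (GammaII m κ a * Sig.det ^ a * gpow κ Sig⁻¹)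

/-- Entrywise coercion of a real matrix to a complex matrix. -/
def cmat {m : ℕ} (A : Matrix (Fin m) (Fin m) ℝ) : Matrix (Fin m) (Fin m) ℂ :=
  A.map Complex.ofReal

/-- `nthR t j` is `t j` when `j < m` and `0` otherwise. -/
def nthR {m : ℕ} (t : Fin m → ℝ) (j : ℕ) : ℝ := if h : j < m then t ⟨j, h⟩ else 0

/-- The `k × k` leading principal submatrix `E_kᵀ M E_k` of a complex matrix. -/
def lpsub {m : ℕ} (M : Matrix (Fin m) (Fin m) ℂ) (k : ℕ) : Matrix (Fin k) (Fin k) ℂ :=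
  (Emat ℂ m k)ᵀ * M * Emat ℂ m k

/-- The complex matrix `I_m - i · Σ^{1/2} T Σ^{1/2}`. -/
def Rmat {m : ℕ} (Shalf T : Matrix (Fin m) (Fin m) ℝ) : Matrix (Fin m) (Fin m) ℂ :=
  1 - Complex.I • (cmat Shalf * cmat T * cmat Shalf)

/-- `A_i = Σ^{1/2} E_i (E_iᵀ (I_m - i Σ^{1/2} T Σ^{1/2}) E_i)⁻¹ E_iᵀ Σ^{1/2}`. -/
def Amat {m : ℕ} (Shalf T : Matrix (Fin m) (Fin m) ℝ) (i : Fin m) :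
    Matrix (Fin m) (Fin m) ℂ :=
  cmat Shalf * Emat ℂ m ((i : ℕ) + 1) * (lpsub (Rmat Shalf T) ((i : ℕ) + 1))⁻¹ *
    (Emat ℂ m ((i : ℕ) + 1))ᵀ * cmat Shalf

/-- The characteristic function of the Riesz type I distribution,
`φ(T) = ∏_i det(E_iᵀ (I - i Σ^{1/2} T Σ^{1/2}) E_i)^{-(t_i - t_{i+1})}`. -/
def phiI {m : ℕ} (Shalf : Matrix (Fin m) (Fin m) ℝ) (t : Fin m → ℝ)
    (T : Matrix (Fin m) (Fin m) ℝ) : ℂ :=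
  ∏ i : Fin m,
    (lpsub (Rmat Shalf T) ((i : ℕ) + 1)).det ^ ((-(t i - nthR t ((i : ℕ) + 1)) : ℝ) : ℂ)

/-- The characteristic function of the Riesz type II distribution,
`ψ(T) = ∏_i det(E_iᵀ (I - i Σ^{1/2} T Σ^{1/2}) E_i)^{(t_i - t_{i+1})}`. -/
def psiII {m : ℕ} (Shalf : Matrix (Fin m) (Fin m) ℝ) (t : Fin m → ℝ)
    (T : Matrix (Fin m) (Fin m) ℝ) : ℂ :=
  ∏ i : Fin m,
    (lpsub (Rmat Shalf T) ((i : ℕ) + 1)).det ^ (((t i - nthR t ((i : ℕ) + 1)) : ℝ) : ℂ)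

/-!
Write `φ(T) = ∏ᵢ det (Mᵢ T) ^ eᵢ` with `Mᵢ T = E_iᵀ (I - i Σ^{1/2} T Σ^{1/2}) E_i` affine in `T`,
with constant derivative `Mᵢ'`. Jacobi's formula `d(det M) = tr (adj M dM)` and the chain rule for
the principal branch give the logarithmic derivative `Dφ = φ • Θ`, where
`Θ(T) H = ∑ᵢ eᵢ tr (Mᵢ(T)⁻¹ Mᵢ' H)`. The determinants stay in the slit plane near `T`, so this holds
on a neighbourhood, and differentiating `φ • Θ` with `d(M⁻¹) = -M⁻¹ dM M⁻¹` gives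
`D²φ(H, K) = φ (Θ(H) Θ(K) - ∑ᵢ eᵢ tr (Mᵢ⁻¹ Mᵢ' H Mᵢ⁻¹ Mᵢ' K))`. With `eᵢ = -cᵢ` and
`Mᵢ' H = -i E_iᵀ Σ^{1/2} H Σ^{1/2} E_i`, cyclicity of the trace turns `tr (Mᵢ⁻¹ Mᵢ' H)` into
`-i tr (A_i H)`.
-/

open Complex Filter Topology

namespace Matrix

section Bilinear

variable {l m n p : Type*} [Fintype m] [Fintype n]

def traceMulCLM : Matrix n m ℂ →L[ℝ] Matrix m n ℂ →L[ℝ] ℂ :=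
  ((mulLinearMap ℝ).compr₂ (traceLinearMap n ℝ ℂ)).toContinuousBilinearMap

@[simp] theorem traceMulCLM_apply (A : Matrix n m ℂ) (B : Matrix m n ℂ) :
    traceMulCLM A B = (A * B).trace :=
  rfl

def mulLeftRightCLM (A : Matrix l m ℂ) (B : Matrix n p ℂ) : Matrix m n ℂ →L[ℝ] Matrix l p ℂ :=
  (mulRightLinearMap l ℝ B ∘ₗ mulLeftLinearMap n ℝ A).toContinuousLinearMap

@[simp] theorem mulLeftRightCLM_apply (A : Matrix l m ℂ) (B : Matrix n p ℂ) (X : Matrix m n ℂ) :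
    mulLeftRightCLM A B X = A * X * B :=
  rfl

end Bilinear

variable {n : Type*} [Fintype n] [DecidableEq n]

theorem det_updateRow_eq_sum_adjugate {α : Type*} [CommRing α] (A : Matrix n n α) (i : n)
    (v : n → α) : (A.updateRow i v).det = ∑ j, A.adjugate j i * v j := by
  rw [← cramer_transpose_apply, cramer_eq_adjugate_mulVec, ← adjugate_transpose]
  rfl

theorem hasFDerivAt_det (A : Matrix n n ℂ) :
    HasFDerivAt (𝕜 := ℝ) det (traceMulCLM A.adjugate) A := by
  let D : ContinuousMultilinearMap ℝ (fun _ : n => n → ℂ) ℂ :=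
    { (detRowAlternating (R := ℂ) (n := n)).toMultilinearMap.restrictScalars ℝ with
      cont := continuous_id.matrix_det }
  refine (D.hasFDerivAt A).congr_fderiv (ContinuousLinearMap.ext fun (H : Matrix n n ℂ) => ?_)
  calc D.linearDeriv A H = ∑ i, (A.updateRow i (H i)).det := D.linearDeriv_apply A H
    _ = ∑ i, ∑ j, A.adjugate j i * H i j := by simp only [det_updateRow_eq_sum_adjugate]
    _ = traceMulCLM A.adjugate H := by
      rw [Finset.sum_comm, traceMulCLM_apply]
      rfl

-- Every matrix norm induces the product topology, so the derivative of `Ring.inverse` for the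
-- operator-norm ring structure is a derivative for the ambient one as well.
theorem hasFDerivAt_nonsing_inv {A : Matrix n n ℂ} (hA : IsUnit A.det) :
    HasFDerivAt (𝕜 := ℝ) (fun X : Matrix n n ℂ => X⁻¹) (-mulLeftRightCLM A⁻¹ A⁻¹) A := by
  let R := Matrix.linftyOpNormedRing (n := n) (α := ℂ)
  let _ := Matrix.linftyOpNormedAlgebra (R := ℝ) (n := n) (α := ℂ)
  have _ : @CompleteSpace (Matrix n n ℂ) R.toUniformSpace := FiniteDimensional.complete ℝ _
  have hU : IsUnit A := (isUnit_iff_isUnit_det A).2 hA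
  have h := hasFDerivAt_ringInverse (𝕜 := ℝ) hU.unit
  have hinv : (fun X : Matrix n n ℂ => X⁻¹) = Ring.inverse := funext nonsing_inv_eq_ringInverse
  rw [hinv, ← hU.unit_spec]
  refine h.congr_fderiv (ContinuousLinearMap.ext fun H => ?_)
  simp only [_root_.neg_apply, ContinuousLinearMap.mulLeftRight_apply, coe_units_inv]
  rfl

end Matrix

theorem HasFDerivAt.finsetProd_of_logDeriv {𝕜 E 𝔸 ι : Type*} [NontriviallyNormedField 𝕜]
    [NormedAddCommGroup E] [NormedSpace 𝕜 E] [NormedCommRing 𝔸] [NormedAlgebra 𝕜 𝔸]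
    [DecidableEq ι] {u : Finset ι} {g : ι → E → 𝔸} {θ : ι → E →L[𝕜] 𝔸} {x : E}
    (hg : ∀ i ∈ u, HasFDerivAt (g i) (g i x • θ i) x) :
    HasFDerivAt (fun y => ∏ i ∈ u, g i y) ((∏ i ∈ u, g i x) • ∑ i ∈ u, θ i) x := by
  refine (HasFDerivAt.finsetProd hg).congr_fderiv ?_
  rw [Finset.smul_sum]
  refine Finset.sum_congr rfl fun i hi => ?_
  rw [smul_smul, Finset.prod_erase_mul _ _ hi]

section DetCpow

variable {E : Type*} [NormedAddCommGroup E] [NormedSpace ℝ E]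

theorem HasFDerivAt.det_cpow {n : Type*} [Fintype n] [DecidableEq n] {f : E → Matrix n n ℂ}
    {f' : E →L[ℝ] Matrix n n ℂ} {x : E} (hf : HasFDerivAt f f' x) (hx : (f x).det ∈ slitPlane)
    (e : ℂ) :
    HasFDerivAt (fun y => (f y).det ^ e) ((f x).det ^ e • e • (traceMulCLM (f x)⁻¹).comp f') x := by
  have hne : (f x).det ≠ 0 := slitPlane_ne_zero hx
  have hadj : (f x).adjugate = (f x).det • (f x)⁻¹ := by
    rw [Matrix.inv_def, smul_smul, Ring.mul_inverse_cancel _ (isUnit_iff_ne_zero.2 hne), one_smul]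
  have hpow : (f x).det ^ (e - 1) * (f x).det = (f x).det ^ e := by
    rw [cpow_sub _ _ hne, cpow_one, div_mul_cancel₀ _ hne]
  refine ((hasStrictDerivAt_cpow_const hx).hasDerivAt.comp_hasFDerivAt x
    ((Matrix.hasFDerivAt_det (f x)).comp x hf)).congr_fderiv (ContinuousLinearMap.ext fun H => ?_)
  show e * (f x).det ^ (e - 1) * ((f x).adjugate * f' H).trace
    = (f x).det ^ e * (e * ((f x)⁻¹ * f' H).trace)
  rw [hadj, Matrix.smul_mul, Matrix.trace_smul, smul_eq_mul, ← hpow]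
  ring

variable {ι : Type*} [Fintype ι] {n : ι → Type*} [∀ i, Fintype (n i)] [∀ i, DecidableEq (n i)]
  {M : ∀ i, E → Matrix (n i) (n i) ℂ} {M' : ∀ i, E →L[ℝ] Matrix (n i) (n i) ℂ} {x : E}

theorem hasFDerivAt_prod_det_cpow (hM : ∀ i, HasFDerivAt (M i) (M' i) x)
    (hx : ∀ i, (M i x).det ∈ slitPlane) (e : ι → ℂ) :
    HasFDerivAt (fun y => ∏ i, (M i y).det ^ e i)
      ((∏ i, (M i x).det ^ e i) • ∑ i, e i • (traceMulCLM (M i x)⁻¹).comp (M' i)) x := by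
  classical
  exact HasFDerivAt.finsetProd_of_logDeriv fun i _ => (hM i).det_cpow (hx i) (e i)

theorem exists_hasFDerivAt_fderiv_prod_det_cpow (hM : ∀ i y, HasFDerivAt (M i) (M' i) y)
    (hx : ∀ i, (M i x).det ∈ slitPlane) (e : ι → ℂ) :
    ∃ L₂ : E →L[ℝ] E →L[ℝ] ℂ, HasFDerivAt (fderiv ℝ fun y => ∏ i, (M i y).det ^ e i) L₂ x ∧
      ∀ H K, L₂ H K = (∏ i, (M i x).det ^ e i) *
        ((∑ i, e i * ((M i x)⁻¹ * M' i H).trace) * (∑ i, e i * ((M i x)⁻¹ * M' i K).trace)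
          - ∑ i, e i * ((M i x)⁻¹ * M' i H * (M i x)⁻¹ * M' i K).trace) := by
  set Θ : E → E →L[ℝ] ℂ := fun y => ∑ i, e i • (traceMulCLM (M i y)⁻¹).comp (M' i)
  have hnear : ∀ᶠ y in 𝓝 x, ∀ i, (M i y).det ∈ slitPlane :=
    eventually_all.2 fun i => ((Matrix.hasFDerivAt_det _).comp x (hM i x)).continuousAt
      |>.eventually_mem (isOpen_slitPlane.mem_nhds (hx i))
  have hfderiv : fderiv ℝ (fun y => ∏ i, (M i y).det ^ e i)
      =ᶠ[𝓝 x] fun y => (∏ i, (M i y).det ^ e i) • Θ y :=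
    hnear.mono fun y hy => (hasFDerivAt_prod_det_cpow (fun i => hM i y) hy e).fderiv
  have hΘ : HasFDerivAt Θ
      (∑ i, e i • ((ContinuousLinearMap.precomp ℂ (M' i)).comp traceMulCLM).comp
        ((-mulLeftRightCLM (M i x)⁻¹ (M i x)⁻¹).comp (M' i))) x :=
    HasFDerivAt.fun_sum fun i _ =>
      (((ContinuousLinearMap.precomp ℂ (M' i)).comp traceMulCLM).hasFDerivAt.comp x
        ((Matrix.hasFDerivAt_nonsing_inv (isUnit_iff_ne_zero.2 (slitPlane_ne_zero (hx i)))).comp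
          x (hM i x))).const_smul (e i)
  refine ⟨_, ((hasFDerivAt_prod_det_cpow (fun i => hM i x) hx e).smul hΘ).congr_of_eventuallyEq
    hfderiv, fun H K => ?_⟩
  simp only [Θ, ContinuousLinearMap.neg_comp, ContinuousLinearMap.comp_neg, _root_.add_apply,
    _root_.smul_apply, _root_.sum_apply, _root_.neg_apply, ContinuousLinearMap.comp_apply,
    ContinuousLinearMap.precomp_apply, ContinuousLinearMap.smulRight_apply, mulLeftRightCLM_apply,
    traceMulCLM_apply, smul_neg, Finset.sum_neg_distrib, smul_eq_mul, Finset.mul_sum,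
    Finset.sum_mul, mul_sub, mul_assoc]
  ring

end DetCpow

section Riesz

variable {m : ℕ}

theorem Emat_transpose_mul_Emat {k : ℕ} (hk : k ≤ m) : (Emat ℂ m k)ᵀ * Emat ℂ m k = 1 := by
  ext i j
  rw [mul_apply, Finset.sum_eq_single ⟨i, i.2.trans_le hk⟩]
  · simp [Emat, one_apply, Fin.ext_iff]
  · intro r _ hr
    simp_all [Emat, Fin.ext_iff]
  · simp

def cmatCLM (m : ℕ) : Matrix (Fin m) (Fin m) ℝ →L[ℝ] Matrix (Fin m) (Fin m) ℂ :=
  Complex.ofRealCLM.toLinearMap.mapMatrix.toContinuousLinearMap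

-- `E_kᵀ Σ^{1/2} X Σ^{1/2} E_k`, bracketed as `hasFDerivAt_lpsub_Rmat` computes it, so that
-- its derivative applied to `X` unfolds to `-(I • lpsubSandwich Shalf X k)`.
def lpsubSandwich (Shalf X : Matrix (Fin m) (Fin m) ℝ) (k : ℕ) : Matrix (Fin k) (Fin k) ℂ :=
  (Emat ℂ m k)ᵀ * cmat Shalf * cmat X * (cmat Shalf * Emat ℂ m k)

variable (Shalf : Matrix (Fin m) (Fin m) ℝ) {k : ℕ}

theorem lpsub_Rmat (hk : k ≤ m) (T : Matrix (Fin m) (Fin m) ℝ) :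
    lpsub (Rmat Shalf T) k = 1 - I • lpsubSandwich Shalf T k := by
  rw [lpsub, Rmat, Matrix.mul_sub, Matrix.sub_mul, Matrix.mul_one, Emat_transpose_mul_Emat hk,
    Matrix.mul_smul, Matrix.smul_mul, lpsubSandwich]
  simp only [Matrix.mul_assoc]

theorem hasFDerivAt_lpsub_Rmat (hk : k ≤ m) (T : Matrix (Fin m) (Fin m) ℝ) :
    HasFDerivAt (fun T => lpsub (Rmat Shalf T) k)
      (-(I • (mulLeftRightCLM ((Emat ℂ m k)ᵀ * cmat Shalf) (cmat Shalf * Emat ℂ m k)).comp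
        (cmatCLM m))) T := by
  simp only [lpsub_Rmat Shalf hk]
  exact (((mulLeftRightCLM ((Emat ℂ m k)ᵀ * cmat Shalf) (cmat Shalf * Emat ℂ m k)).comp
    (cmatCLM m)).hasFDerivAt.const_smul I).const_sub 1

-- Instantiated at real matrices, the general lemma applies the derivatives `Mᵢ'` through the
-- topology of `Matrix.normedAddCommGroup`, where `simp` cannot evaluate them. Restating it here,
-- up to definitional unfolding, evaluates them once.
theorem exists_hasFDerivAt_fderiv_phiI (t : Fin m → ℝ) (T : Matrix (Fin m) (Fin m) ℝ)
    (hT : ∀ i : Fin m, (lpsub (Rmat Shalf T) (i + 1)).det ∈ slitPlane) :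
    ∃ L₂ : Matrix (Fin m) (Fin m) ℝ →L[ℝ] Matrix (Fin m) (Fin m) ℝ →L[ℝ] ℂ,
      HasFDerivAt (fderiv ℝ (phiI Shalf t)) L₂ T ∧ ∀ H K, L₂ H K = phiI Shalf t T *
        ((∑ i : Fin m, ((-(t i - nthR t (i + 1)) : ℝ) : ℂ)
            * ((lpsub (Rmat Shalf T) (i + 1))⁻¹ * -(I • lpsubSandwich Shalf H (i + 1))).trace)
          * (∑ i : Fin m, ((-(t i - nthR t (i + 1)) : ℝ) : ℂ)
            * ((lpsub (Rmat Shalf T) (i + 1))⁻¹ * -(I • lpsubSandwich Shalf K (i + 1))).trace)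
          - ∑ i : Fin m, ((-(t i - nthR t (i + 1)) : ℝ) : ℂ)
            * ((lpsub (Rmat Shalf T) (i + 1))⁻¹ * -(I • lpsubSandwich Shalf H (i + 1))
              * (lpsub (Rmat Shalf T) (i + 1))⁻¹ * -(I • lpsubSandwich Shalf K (i + 1))).trace) :=
  exists_hasFDerivAt_fderiv_prod_det_cpow
    (fun (i : Fin m) T' => hasFDerivAt_lpsub_Rmat Shalf (k := i + 1) i.isLt T') hT _

variable (T : Matrix (Fin m) (Fin m) ℝ) (i : Fin m)

theorem trace_inv_mul_lpsubSandwich (X : Matrix (Fin m) (Fin m) ℝ) :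
    ((lpsub (Rmat Shalf T) (i + 1))⁻¹ * lpsubSandwich Shalf X (i + 1)).trace
      = (Amat Shalf T i * cmat X).trace := by
  simp only [Amat, lpsubSandwich, Matrix.mul_assoc]
  rw [trace_mul_comm (cmat Shalf)]
  simp only [Matrix.mul_assoc]
  rw [trace_mul_comm (Emat ℂ m (i + 1))]
  simp only [Matrix.mul_assoc]

theorem trace_inv_mul_lpsubSandwich_mul_inv_mul_lpsubSandwich (X Y : Matrix (Fin m) (Fin m) ℝ) :
    ((lpsub (Rmat Shalf T) (i + 1))⁻¹ * lpsubSandwich Shalf X (i + 1)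
        * (lpsub (Rmat Shalf T) (i + 1))⁻¹ * lpsubSandwich Shalf Y (i + 1)).trace
      = (Amat Shalf T i * cmat X * Amat Shalf T i * cmat Y).trace := by
  simp only [Amat, lpsubSandwich, Matrix.mul_assoc]
  rw [trace_mul_comm (cmat Shalf)]
  simp only [Matrix.mul_assoc]
  rw [trace_mul_comm (Emat ℂ m (i + 1))]
  simp only [Matrix.mul_assoc]

end Riesz

theorem riesz_typeI_charfun_second_deriv_general {m : ℕ}
    (Shalf : Matrix (Fin m) (Fin m) ℝ)
    (t : Fin m → ℝ)
    (T : Matrix (Fin m) (Fin m) ℝ)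
    (hT : ∀ i : Fin m, (lpsub (Rmat Shalf T) ((i : ℕ) + 1)).det ∈ Complex.slitPlane) :
    DifferentiableAt ℝ (phiI Shalf t) T ∧
    ∃ L₂ : Matrix (Fin m) (Fin m) ℝ →L[ℝ] (Matrix (Fin m) (Fin m) ℝ →L[ℝ] ℂ),
      HasFDerivAt (fderiv ℝ (phiI Shalf t)) L₂ T ∧
        ∀ H K : Matrix (Fin m) (Fin m) ℝ,
          L₂ H K = Complex.I ^ 2
              * ((∑ i : Fin m, ((t i - nthR t ((i : ℕ) + 1) : ℝ) : ℂ)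
                    * (Amat Shalf T i * cmat H).trace)
                  * (∑ j : Fin m, ((t j - nthR t ((j : ℕ) + 1) : ℝ) : ℂ)
                      * (Amat Shalf T j * cmat K).trace)
                + ∑ i : Fin m, ((t i - nthR t ((i : ℕ) + 1) : ℝ) : ℂ)
                    * (Amat Shalf T i * cmat H * Amat Shalf T i * cmat K).trace)
              * phiI Shalf t T := by
  obtain ⟨L₂, hL₂, hL₂_apply⟩ := exists_hasFDerivAt_fderiv_phiI Shalf t T hT
  have hφ := hasFDerivAt_prod_det_cpow
    (fun i : Fin m => hasFDerivAt_lpsub_Rmat Shalf (k := i + 1) i.isLt T) hT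
    (fun i => ((-(t i - nthR t (i + 1)) : ℝ) : ℂ))
  refine ⟨hφ.differentiableAt, L₂, hL₂, fun H K => ?_⟩
  rw [hL₂_apply]
  simp only [Matrix.mul_smul, Matrix.smul_mul, trace_neg, trace_smul, smul_eq_mul,
    trace_inv_mul_lpsubSandwich, trace_inv_mul_lpsubSandwich_mul_inv_mul_lpsubSandwich,
    Complex.ofReal_neg, neg_mul, mul_neg, neg_neg, Finset.sum_neg_distrib, mul_left_comm _ I,
    ← Finset.mul_sum]
  ring

/-- Second Fréchet derivative of the characteristic function of the Riesz type I
distribution: `D²φ(T)(H,K) = i² [(∑_i c_i tr(A_i H))(∑_j c_j tr(A_j K))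
  + ∑_i c_i tr(A_i H A_i K)] φ(T)`, where `c_i = t_i - t_{i+1}`. -/
theorem riesz_typeI_charfun_second_deriv {m : ℕ} (hm : 1 ≤ m)
    (Sig Shalf : Matrix (Fin m) (Fin m) ℝ)
    (hSig : Sig.PosDef) (hShalf : Shalf.PosDef) (hShalf_symm : Shalf.IsSymm)
    (hsq : Shalf * Shalf = Sig)
    (t : Fin m → ℝ)
    (T : Matrix (Fin m) (Fin m) ℝ)
    (hT : ∀ i : Fin m, (lpsub (Rmat Shalf T) ((i : ℕ) + 1)).det ∈ Complex.slitPlane) :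
    DifferentiableAt ℝ (phiI Shalf t) T ∧
    ∃ L₂ : Matrix (Fin m) (Fin m) ℝ →L[ℝ] (Matrix (Fin m) (Fin m) ℝ →L[ℝ] ℂ),
      HasFDerivAt (fderiv ℝ (phiI Shalf t)) L₂ T ∧
        ∀ H K : Matrix (Fin m) (Fin m) ℝ,
          L₂ H K = Complex.I ^ 2
              * ((∑ i : Fin m, ((t i - nthR t ((i : ℕ) + 1) : ℝ) : ℂ)
                    * (Amat Shalf T i * cmat H).trace)
                  * (∑ j : Fin m, ((t j - nthR t ((j : ℕ) + 1) : ℝ) : ℂ)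
                      * (Amat Shalf T j * cmat K).trace)
                + ∑ i : Fin m, ((t i - nthR t ((i : ℕ) + 1) : ℝ) : ℂ)
                    * (Amat Shalf T i * cmat H * Amat Shalf T i * cmat K).trace)
              * phiI Shalf t T :=
  riesz_typeI_charfun_second_deriv_general Shalf t T hT
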